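/- Let S be a real symmetric positive definite 2N×2N matrix. Then det S = det Ṡ · det(I_{2N} + Γ(S)), and moreover det(I_{2N} + Γ(S)) = det(I_{2N} − Γ(S)), so that det S = det Ṡ · √(det(I_{2N} − Γ(S)²)). -/

import Mathlib

open Matrix Polynomial

/-- The proper part `Ċ` of a real `2N × 2N` matrix `C` with blocks `[[A, B],[B′, D]]`:
`Ċ = (1/2)·[[A+D, B−B′],[B′−B, A+D]]`. -/
noncomputable def dotPart {N : ℕ} (C : Matrix (Fin N ⊕ Fin N) (Fin N ⊕ Fin N) ℝ) :
    Matrix (Fin N ⊕ Fin N) (Fin N ⊕ Fin N) ℝ :=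
  (1/2 : ℝ) • Matrix.fromBlocks (C.toBlocks₁₁ + C.toBlocks₂₂) (C.toBlocks₁₂ - C.toBlocks₂₁)
    (C.toBlocks₂₁ - C.toBlocks₁₂) (C.toBlocks₁₁ + C.toBlocks₂₂)

/-- The improper part `C̈ = C − Ċ`. -/
noncomputable def ddotPart {N : ℕ} (C : Matrix (Fin N ⊕ Fin N) (Fin N ⊕ Fin N) ℝ) :
    Matrix (Fin N ⊕ Fin N) (Fin N ⊕ Fin N) ℝ :=
  C - dotPart C

/-- `Γ(C) = Ċ^{-1/2} C̈ Ċ^{-1/2}`, where `Ċ^{1/2}` is the (unique) positive semidefinite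
(hence, as `Ċ` is positive definite, the unique symmetric positive definite) square root
of `Ċ`, given a proof `h` that `Ċ` is positive definite. -/
noncomputable def Gamma {N : ℕ} (C : Matrix (Fin N ⊕ Fin N) (Fin N ⊕ Fin N) ℝ)
    (h : (dotPart C).PosDef) : Matrix (Fin N ⊕ Fin N) (Fin N ⊕ Fin N) ℝ :=
  ((h.posSemidef.1.eigenvectorUnitary : Matrix (Fin N ⊕ Fin N) (Fin N ⊕ Fin N) ℝ) *
      diagonal ((↑) ∘ (Real.sqrt ·) ∘ h.posSemidef.1.eigenvalues) *
      (star (h.posSemidef.1.eigenvectorUnitary : Matrix (Fin N ⊕ Fin N) (Fin N ⊕ Fin N) ℝ)))⁻¹ *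
    ddotPart C *
    ((h.posSemidef.1.eigenvectorUnitary : Matrix (Fin N ⊕ Fin N) (Fin N ⊕ Fin N) ℝ) *
      diagonal ((↑) ∘ (Real.sqrt ·) ∘ h.posSemidef.1.eigenvalues) *
      (star (h.posSemidef.1.eigenvectorUnitary : Matrix (Fin N ⊕ Fin N) (Fin N ⊕ Fin N) ℝ)))⁻¹

/-!
The proper part `Ṡ` commutes with the complex structure `J = [[0, -1], [1, 0]]` and the improper
part `S̈` anticommutes with it. Since `J` then also commutes with `R = Ṡ^{1/2}`, it anticommutes
with `Γ = R⁻¹ S̈ R⁻¹`, so conjugation by `J` carries `1 + Γ` to `1 - Γ`. The factorization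
`S = R (1 + Γ) R` gives `det S = det Ṡ · det (1 + Γ)`, whence `det (1 + Γ) > 0`, and
`det (1 - Γ²) = det (1 + Γ) · det (1 - Γ) = det (1 + Γ)²`.
-/

namespace Matrix

variable {n R : Type*} [Fintype n] [DecidableEq n] [CommRing R]

theorem det_one_add_eq_det_one_sub_of_mul_eq_neg_mul {G J : Matrix n n R}
    (hJ : IsUnit J) (hJG : J * G = -(G * J)) : (1 + G).det = (1 - G).det := by
  rw [← det_conj hJ (1 + G), mul_add, mul_one, add_mul, hJG, neg_mul, mul_assoc,
    mul_nonsing_inv _ ((isUnit_iff_isUnit_det J).mp hJ), mul_one, ← sub_eq_add_neg]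

theorem mul_one_add_inv_mul_mul_inv_mul {A E : Matrix n n R} (hA : IsUnit A) :
    A * (1 + A⁻¹ * E * A⁻¹) * A = A * A + E := by
  have hA' := (isUnit_iff_isUnit_det A).mp hA
  simp only [mul_add, add_mul, mul_one, ← mul_assoc, mul_nonsing_inv _ hA', one_mul]
  simp only [mul_assoc, nonsing_inv_mul _ hA', mul_one]

theorem mul_inv_mul_mul_inv_eq_neg_mul {A E J : Matrix n n R} (hA : IsUnit A)
    (hJA : Commute J A) (hJE : J * E = -(E * J)) :
    J * (A⁻¹ * E * A⁻¹) = -(A⁻¹ * E * A⁻¹ * J) := by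
  have hJA' : Commute J A⁻¹ := by
    simpa only [coe_units_inv, IsUnit.unit_spec] using hJA.units_inv_right (u := hA.unit)
  calc J * (A⁻¹ * E * A⁻¹) = A⁻¹ * (J * E) * A⁻¹ := by simp only [← mul_assoc, hJA'.eq]
    _ = -(A⁻¹ * E * (J * A⁻¹)) := by simp only [hJE, mul_neg, neg_mul, mul_assoc]
    _ = -(A⁻¹ * E * A⁻¹ * J) := by simp only [hJA'.eq, mul_assoc]

open scoped MatrixOrder ComplexOrder

variable {𝕜 : Type*} [RCLike 𝕜]

theorem PosSemidef.eigenvectorUnitary_mul_diagonal_sqrt_mul_star {A : Matrix n n 𝕜}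
    (hA : A.PosSemidef) :
    (hA.1.eigenvectorUnitary : Matrix n n 𝕜) *
        diagonal ((↑) ∘ (Real.sqrt ·) ∘ hA.1.eigenvalues) *
        star (hA.1.eigenvectorUnitary : Matrix n n 𝕜) = CFC.sqrt A := by
  rw [CFC.sqrt_eq_real_sqrt _ hA.nonneg, cfcₙ_eq_cfc, hA.1.cfc_eq, IsHermitian.cfc,
    Unitary.conjStarAlgAut_apply]

theorem PosDef.isUnit_sqrt {A : Matrix n n 𝕜} (hA : A.PosDef) : IsUnit (CFC.sqrt A) := by
  have hdet : IsUnit ((CFC.sqrt A).det * (CFC.sqrt A).det) := by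
    rw [← det_mul, CFC.sqrt_mul_sqrt_self A hA.posSemidef.nonneg]
    exact hA.isUnit.map detMonoidHom
  exact (isUnit_iff_isUnit_det _).mpr (isUnit_of_mul_isUnit_left hdet)

end Matrix

section ComplexStructure

variable {N : ℕ} (C : Matrix (Fin N ⊕ Fin N) (Fin N ⊕ Fin N) ℝ)

theorem commute_J_dotPart : Commute (J (Fin N) ℝ) (dotPart C) := by
  simp only [Commute, SemiconjBy, dotPart, J, Matrix.mul_smul, Matrix.smul_mul,
    fromBlocks_multiply, Matrix.zero_mul, Matrix.mul_zero, Matrix.one_mul,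
    Matrix.mul_one, Matrix.neg_mul, Matrix.mul_neg, zero_add, add_zero, neg_sub]

theorem ddotPart_eq_fromBlocks :
    ddotPart C =
      fromBlocks ((1 / 2 : ℝ) • (C.toBlocks₁₁ - C.toBlocks₂₂))
        ((1 / 2 : ℝ) • (C.toBlocks₁₂ + C.toBlocks₂₁))
        ((1 / 2 : ℝ) • (C.toBlocks₁₂ + C.toBlocks₂₁))
        (-((1 / 2 : ℝ) • (C.toBlocks₁₁ - C.toBlocks₂₂))) := by
  conv_lhs => rw [ddotPart, ← fromBlocks_toBlocks C, dotPart, fromBlocks_smul, sub_eq_add_neg,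
    fromBlocks_neg, fromBlocks_add]
  simp only [toBlocks_fromBlocks₁₁, toBlocks_fromBlocks₁₂, toBlocks_fromBlocks₂₁,
    toBlocks_fromBlocks₂₂]
  congr 1 <;> module

theorem J_mul_ddotPart : J (Fin N) ℝ * ddotPart C = -(ddotPart C * J (Fin N) ℝ) := by
  simp only [ddotPart_eq_fromBlocks, J, fromBlocks_multiply, fromBlocks_neg, Matrix.zero_mul,
    Matrix.mul_zero, Matrix.one_mul, Matrix.mul_one, Matrix.neg_mul, Matrix.mul_neg, zero_add,
    add_zero, neg_neg, neg_zero]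

end ComplexStructure

section Gamma

open scoped MatrixOrder

variable {N : ℕ} (C : Matrix (Fin N ⊕ Fin N) (Fin N ⊕ Fin N) ℝ) (h : (dotPart C).PosDef)

theorem Gamma_eq :
    Gamma C h = (CFC.sqrt (dotPart C))⁻¹ * ddotPart C * (CFC.sqrt (dotPart C))⁻¹ := by
  rw [← h.posSemidef.eigenvectorUnitary_mul_diagonal_sqrt_mul_star]
  -- the coercion `ℝ → ℝ` in `Gamma` is the identity, `RCLike.ofReal` only up to defeq
  rfl

theorem det_eq_det_dotPart_mul_det_one_add_Gamma :
    C.det = (dotPart C).det * (1 + Gamma C h).det := by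
  have hfactor : C = CFC.sqrt (dotPart C) * (1 + Gamma C h) * CFC.sqrt (dotPart C) := by
    rw [Gamma_eq, mul_one_add_inv_mul_mul_inv_mul h.isUnit_sqrt,
      CFC.sqrt_mul_sqrt_self _ h.posSemidef.nonneg, ddotPart, add_sub_cancel]
  conv_lhs => rw [hfactor, det_mul, det_mul, mul_right_comm, ← det_mul,
    CFC.sqrt_mul_sqrt_self _ h.posSemidef.nonneg]

theorem det_one_add_Gamma_eq_det_one_sub_Gamma :
    (1 + Gamma C h).det = (1 - Gamma C h).det := by
  refine det_one_add_eq_det_one_sub_of_mul_eq_neg_mul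
    ((isUnit_iff_isUnit_det _).mpr (isUnit_det_J (Fin N) ℝ)) ?_
  rw [Gamma_eq]
  exact mul_inv_mul_mul_inv_eq_neg_mul h.isUnit_sqrt
    ((commute_J_dotPart C).symm.cfcₙ_nnreal _).symm (J_mul_ddotPart C)

end Gamma

theorem statement8_general (N : ℕ) (S : Matrix (Fin N ⊕ Fin N) (Fin N ⊕ Fin N) ℝ)
    (hS : S.PosDef) (hd : (dotPart S).PosDef) :
    S.det = (dotPart S).det * (1 + Gamma S hd).det ∧
    (1 + Gamma S hd).det = (1 - Gamma S hd).det ∧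
    S.det = (dotPart S).det * Real.sqrt (1 - Gamma S hd ^ 2).det := by
  have hfactor := det_eq_det_dotPart_mul_det_one_add_Gamma S hd
  have hsymm := det_one_add_Gamma_eq_det_one_sub_Gamma S hd
  have hpos : 0 < (1 + Gamma S hd).det :=
    pos_of_mul_pos_right (hfactor ▸ hS.det_pos) hd.det_pos.le
  have hsq : 1 - Gamma S hd ^ 2 = (1 + Gamma S hd) * (1 - Gamma S hd) := by noncomm_ring
  refine ⟨hfactor, hsymm, ?_⟩
  rw [hsq, det_mul, ← hsymm, Real.sqrt_mul_self hpos.le, hfactor]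

theorem statement8 (N : ℕ) (hN : 1 ≤ N) (S : Matrix (Fin N ⊕ Fin N) (Fin N ⊕ Fin N) ℝ)
    (hS : S.PosDef) (hd : (dotPart S).PosDef) :
    S.det = (dotPart S).det * (1 + Gamma S hd).det ∧
    (1 + Gamma S hd).det = (1 - Gamma S hd).det ∧
    S.det = (dotPart S).det * Real.sqrt (1 - Gamma S hd ^ 2).det :=
  statement8_general N S hS hd
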